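/- Let n be odd, q = 2^n, and f, a, b, c ∈ 𝔽_q with (f,a,b) ≠ (0,0,0). Then S = Σ_{x ∈ 𝔽_q} (−1)^{Tr(f x⁹ + a x⁵ + b x³ + c x)} lies in the set {0, ±2^{(n+1)/2}, ±2^{(n+3)/2}, ±2^{(n+5)/2}}. -/

import Mathlib

open Finset Polynomial

private lemma zmod2_cases : ∀ s : ZMod 2, s = 0 ∨ s = 1 := by decide

private lemma zmod2_ne_one : ∀ s : ZMod 2, s ≠ 1 → s = 0 := by decide

private lemma zmod2_ne_zero : ∀ s : ZMod 2, s ≠ 0 → s = 1 := by decide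

private lemma zmod2_chi_add : ∀ s t : ZMod 2,
    (-1 : ℤ) ^ (s + t).val = (-1 : ℤ) ^ s.val * (-1 : ℤ) ^ t.val := by decide

private lemma zmod2_chi_succ : ∀ s : ZMod 2,
    (-1 : ℤ) ^ (s + 1).val = -(-1 : ℤ) ^ s.val := by decide

private lemma zmod2_solve : ∀ A B C : ZMod 2, A + B = C → B = A + C := by decide

private lemma sum_sign_eq_zero {G : Type*} [AddCommGroup G] [Fintype G] (h : G → ZMod 2)
    (hadd : ∀ x y, h (x + y) = h x + h y) (x₀ : G) (hx₀ : h x₀ = 1) :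
    ∑ x : G, (-1 : ℤ) ^ (h x).val = 0 := by
  have key : ∑ x : G, (-1 : ℤ) ^ (h (x + x₀)).val = ∑ x : G, (-1 : ℤ) ^ (h x).val :=
    Fintype.sum_equiv (Equiv.addRight x₀) _ _ (fun x => rfl)
  have key2 : ∀ x : G, (-1 : ℤ) ^ (h (x + x₀)).val = -(-1 : ℤ) ^ (h x).val := by
    intro x; rw [hadd, hx₀]; exact zmod2_chi_succ _
  rw [Finset.sum_congr rfl (fun x _ => key2 x), Finset.sum_neg_distrib] at key
  linarith

private lemma sum_sign_finset {G : Type*} [AddCommGroup G] [DecidableEq G] (s : Finset G)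
    (h2 : ∀ z : G, z + z = 0)
    (hclosed : ∀ u ∈ s, ∀ v ∈ s, u + v ∈ s) (h : G → ZMod 2)
    (hadd : ∀ u ∈ s, ∀ v ∈ s, h (u + v) = h u + h v) :
    (∑ x ∈ s, (-1 : ℤ) ^ (h x).val) = 0 ∨
      (∑ x ∈ s, (-1 : ℤ) ^ (h x).val) = s.card := by
  by_cases hex : ∃ x₀ ∈ s, h x₀ = 1
  · left
    obtain ⟨x₀, hx₀s, hx₀⟩ := hex
    have key : ∑ x ∈ s, (-1 : ℤ) ^ (h (x + x₀)).val = ∑ x ∈ s, (-1 : ℤ) ^ (h x).val := by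
      apply Finset.sum_bij' (fun x _ => x + x₀) (fun x _ => x + x₀)
      · intro a ha; exact hclosed a ha x₀ hx₀s
      · intro a ha; exact hclosed a ha x₀ hx₀s
      · intro a ha; rw [add_assoc, h2, add_zero]
      · intro a ha; rw [add_assoc, h2, add_zero]
      · intro a ha; rfl
    have key2 : ∀ x ∈ s, (-1 : ℤ) ^ (h (x + x₀)).val = -(-1 : ℤ) ^ (h x).val := by
      intro x hx; rw [hadd x hx x₀ hx₀s, hx₀]; exact zmod2_chi_succ _
    rw [Finset.sum_congr rfl key2, Finset.sum_neg_distrib] at key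
    linarith
  · right
    push_neg at hex
    have hz : ∀ x ∈ s, (-1 : ℤ) ^ (h x).val = 1 := by
      intro x hx
      rw [zmod2_ne_one _ (hex x hx)]
      rfl
    rw [Finset.sum_congr rfl hz, Finset.sum_const, nsmul_eq_mul, mul_one]

private lemma int_sqrt_pow_two {S : ℤ} {m : ℕ} (h : S ^ 2 = 2 ^ m) :
    ∃ k, m = 2 * k ∧ (S = 2 ^ k ∨ S = -(2 ^ k)) := by
  have hA : S.natAbs ^ 2 = 2 ^ m := by
    have := congrArg Int.natAbs h
    simpa [Int.natAbs_pow] using this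
  have hdvd : S.natAbs ∣ 2 ^ m := hA ▸ dvd_pow_self _ two_ne_zero
  obtain ⟨k, hk, hAk⟩ := (Nat.dvd_prime_pow Nat.prime_two).mp hdvd
  rw [hAk, ← pow_mul] at hA
  have hm : k * 2 = m := Nat.pow_right_injective (le_refl 2) hA
  refine ⟨k, by omega, ?_⟩
  rcases Int.natAbs_eq S with h1 | h1
  · left; rw [h1, hAk]; push_cast; ring
  · right; rw [h1, hAk]; push_cast; ring

section TraceLemmas
variable {K : Type*} [Field K] [Fintype K] [Algebra (ZMod 2) K]

private lemma trace_sq (z : K) :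
    Algebra.trace (ZMod 2) K (z ^ 2) = Algebra.trace (ZMod 2) K z := by
  haveI : CharP K 2 := charP_of_injective_algebraMap (algebraMap (ZMod 2) K).injective 2
  have hbij : Function.Bijective (frobenius K 2) :=
    (Finite.injective_iff_bijective).mp (frobenius_inj K 2)
  have hcomm : ∀ r : ZMod 2,
      frobenius K 2 (algebraMap (ZMod 2) K r) = algebraMap (ZMod 2) K r := by
    intro r
    rw [frobenius_def, ← map_pow]
    congr 1
    exact match r with | 0 => rfl | 1 => rfl
  let e : K ≃ₐ[ZMod 2] K :=
    { RingEquiv.ofBijective (frobenius K 2) hbij with commutes' := hcomm }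
  have := Algebra.trace_eq_of_algEquiv e z
  exact this

private lemma trace_pow2 (k : ℕ) (z : K) :
    Algebra.trace (ZMod 2) K (z ^ 2 ^ k) = Algebra.trace (ZMod 2) K z := by
  induction k generalizing z with
  | zero => simp
  | succ k ih => rw [pow_succ, pow_mul, trace_sq, ih]

private lemma trace_nondeg {t : K} (ht : t ≠ 0) :
    ∃ x : K, Algebra.trace (ZMod 2) K (t * x) ≠ 0 := by
  have := (traceForm_nondegenerate (ZMod 2) K).1 t
  simp_rw [Algebra.traceForm_apply] at this
  by_contra hf
  push_neg at hf
  exact ht (this hf)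

private lemma sum_chi_mul_eq_zero {t : K} (ht : t ≠ 0) :
    ∑ x : K, (-1 : ℤ) ^ (Algebra.trace (ZMod 2) K (x * t)).val = 0 := by
  obtain ⟨x₀, hx₀⟩ := trace_nondeg ht
  apply sum_sign_eq_zero (fun x => Algebra.trace (ZMod 2) K (x * t))
    (fun x y => by
      show Algebra.trace (ZMod 2) K ((x + y) * t) = _
      rw [add_mul, map_add]) x₀
  rw [mul_comm]
  exact zmod2_ne_zero _ hx₀

end TraceLemmas

private def Fp {K : Type*} [Field K] (f a b c x : K) : K :=
  f * x ^ 9 + a * x ^ 5 + b * x ^ 3 + c * x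

private def Mp {K : Type*} [Field K] (n : ℕ) (f a b u : K) : K :=
  f * u ^ 8 + a * u ^ 4 + b * u ^ 2 +
    (f * u) ^ 2 ^ (n - 3) + (a * u) ^ 2 ^ (n - 2) + (b * u) ^ 2 ^ (n - 1)

/-- Let `n` be odd, `q = 2^n`, and `(f,a,b) ≠ (0,0,0)` in `𝔽_q`.  Then
`S = ∑_{x ∈ 𝔽_q} (−1)^{Tr(f x⁹ + a x⁵ + b x³ + c x)}` lies in
`{0, ±2^{(n+1)/2}, ±2^{(n+3)/2}, ±2^{(n+5)/2}}`. -/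
theorem char_sum_values
    (n : ℕ) (hn : Odd n) (K : Type*) [Field K] [Fintype K]
    [Algebra (ZMod 2) K] (hcard : Fintype.card K = 2 ^ n)
    (f a b c : K) (hfab : ¬(f = 0 ∧ a = 0 ∧ b = 0)) :
    (∑ x : K, (-1 : ℤ) ^ (Algebra.trace (ZMod 2) K
        (f * x ^ 9 + a * x ^ 5 + b * x ^ 3 + c * x)).val) ∈
      ({0, 2 ^ ((n + 1) / 2), -(2 ^ ((n + 1) / 2)),
        2 ^ ((n + 3) / 2), -(2 ^ ((n + 3) / 2)),
        2 ^ ((n + 5) / 2), -(2 ^ ((n + 5) / 2))} : Set ℤ) := by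
  classical
  haveI hch : CharP K 2 := charP_of_injective_algebraMap (algebraMap (ZMod 2) K).injective 2
  obtain ⟨m, hm⟩ := hn
  set S : ℤ := ∑ x : K, (-1 : ℤ) ^ (Algebra.trace (ZMod 2) K
      (f * x ^ 9 + a * x ^ 5 + b * x ^ 3 + c * x)).val with hS
  have hS' : S = ∑ x : K, (-1 : ℤ) ^ (Algebra.trace (ZMod 2) K (Fp f a b c x)).val := rfl
  by_cases hn3 : n < 3
  · -- n = 1
    have hn1 : n = 1 := by omega
    subst hn1
    have hcard2 : Fintype.card K = 2 := by simpa using hcard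
    have huniv : (Finset.univ : Finset K) = {0, 1} := by
      symm
      apply Finset.eq_univ_of_card
      rw [hcard2, Finset.card_insert_of_notMem (by simp), Finset.card_singleton]
    have h01 : (0 : K) ∉ ({1} : Finset K) := by simp
    rw [hS, huniv, Finset.sum_insert h01, Finset.sum_singleton]
    have hz : f * (0 : K) ^ 9 + a * 0 ^ 5 + b * 0 ^ 3 + c * 0 = 0 := by ring
    rw [hz, map_zero]
    rcases zmod2_cases (Algebra.trace (ZMod 2) K (f * 1 ^ 9 + a * 1 ^ 5 + b * 1 ^ 3 + c * 1))
      with h1 | h1 <;> rw [h1]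
    · right; left; norm_num
    · left; norm_num
      decide
  push_neg at hn3
  -- basic char-2 facts
  have h20 : (2 : K) = 0 := by
    have := CharP.cast_eq_zero K 2
    exact_mod_cast this
  have h2K : ∀ z : K, z + z = 0 := fun z => by linear_combination z * h20
  have hq : ∀ z : K, z ^ 2 ^ n = z := by
    intro z; rw [← hcard]; exact FiniteField.pow_card z
  have hp : ∀ (k : ℕ) (x y : K), (x + y) ^ 2 ^ k = x ^ 2 ^ k + y ^ 2 ^ k := by
    intro k x y
    induction k generalizing x y with
    | zero => simp
    | succ k ih =>
      rw [pow_succ, pow_mul, pow_mul, pow_mul, ih]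
      have h2 : ∀ s t : K, (s + t) ^ 2 = s ^ 2 + t ^ 2 := by
        intro s t; linear_combination (s * t) * h20
      exact h2 _ _
  have htwist : ∀ (k : ℕ), k ≤ n → ∀ x t : K,
      Algebra.trace (ZMod 2) K (x ^ 2 ^ k * t) =
      Algebra.trace (ZMod 2) K (x * t ^ 2 ^ (n - k)) := by
    intro k hk x t
    conv_rhs => rw [← trace_pow2 (K := K) k]
    congr 1
    rw [mul_pow, ← pow_mul, ← pow_add, Nat.sub_add_cancel hk, hq]
  -- the bilinear identity
  have hTrxM : ∀ x u : K, Algebra.trace (ZMod 2) K (x * Mp n f a b u) =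
      Algebra.trace (ZMod 2) K (x * (f * u ^ 8)) +
      Algebra.trace (ZMod 2) K (x * (a * u ^ 4)) +
      Algebra.trace (ZMod 2) K (x * (b * u ^ 2)) +
      Algebra.trace (ZMod 2) K (x ^ 2 ^ 3 * (f * u)) +
      Algebra.trace (ZMod 2) K (x ^ 2 ^ 2 * (a * u)) +
      Algebra.trace (ZMod 2) K (x ^ 2 ^ 1 * (b * u)) := by
    intro x u
    rw [htwist 3 (by omega), htwist 2 (by omega), htwist 1 (by omega)]
    unfold Mp
    simp only [mul_add, map_add]
  have hFexp : ∀ x u : K, Fp f a b c x + Fp f a b c (x + u) =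
      (x * (f * u ^ 8) + x * (a * u ^ 4) + x * (b * u ^ 2)) +
      (x ^ 2 ^ 3 * (f * u) + x ^ 2 ^ 2 * (a * u) + x ^ 2 ^ 1 * (b * u)) +
      Fp f a b c u := by
    intro x u
    have h8 : (x + u) ^ 8 = x ^ 8 + u ^ 8 := by
      have := hp 3 x u; norm_num at this; exact this
    have h4 : (x + u) ^ 4 = x ^ 4 + u ^ 4 := by
      have := hp 2 x u; norm_num at this; exact this
    have h2 : (x + u) ^ 2 = x ^ 2 + u ^ 2 := by
      have := hp 1 x u; norm_num at this; exact this
    have e9 : (x + u) ^ 9 = x ^ 9 + x * u ^ 8 + x ^ 8 * u + u ^ 9 := by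
      rw [show (x + u) ^ 9 = (x + u) * (x + u) ^ 8 by ring, h8]; ring
    have e5 : (x + u) ^ 5 = x ^ 5 + x * u ^ 4 + x ^ 4 * u + u ^ 5 := by
      rw [show (x + u) ^ 5 = (x + u) * (x + u) ^ 4 by ring, h4]; ring
    have e3 : (x + u) ^ 3 = x ^ 3 + x * u ^ 2 + x ^ 2 * u + u ^ 3 := by
      rw [show (x + u) ^ 3 = (x + u) * (x + u) ^ 2 by ring, h2]; ring
    unfold Fp
    linear_combination f * e9 + a * e5 + b * e3 +
      (f * x ^ 9 + a * x ^ 5 + b * x ^ 3 + c * x) * h20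
  have hTrB : ∀ x u : K,
      Algebra.trace (ZMod 2) K (Fp f a b c x + Fp f a b c (x + u)) =
      Algebra.trace (ZMod 2) K (x * Mp n f a b u) +
      Algebra.trace (ZMod 2) K (Fp f a b c u) := by
    intro x u
    rw [hFexp, hTrxM]
    simp only [map_add]
    abel
  -- the radical
  set W' : Finset K := Finset.univ.filter (fun u => Mp n f a b u = 0) with hW'
  have hMadd : ∀ u v : K, Mp n f a b (u + v) = Mp n f a b u + Mp n f a b v := by
    intro u v
    have h8 : (u + v) ^ 8 = u ^ 8 + v ^ 8 := by
      have := hp 3 u v; norm_num at this; exact this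
    have h4 : (u + v) ^ 4 = u ^ 4 + v ^ 4 := by
      have := hp 2 u v; norm_num at this; exact this
    have h2 : (u + v) ^ 2 = u ^ 2 + v ^ 2 := by
      have := hp 1 u v; norm_num at this; exact this
    have hfk : ∀ (k : ℕ) (t : K), (t * (u + v)) ^ 2 ^ k = (t * u) ^ 2 ^ k + (t * v) ^ 2 ^ k := by
      intro k t; rw [mul_add, hp k]
    unfold Mp
    rw [h8, h4, h2, hfk, hfk, hfk]
    ring
  -- S^2 = 2^n * T
  have hchi : ∀ s t : ZMod 2,
      (-1 : ℤ) ^ (s + t).val = (-1 : ℤ) ^ s.val * (-1 : ℤ) ^ t.val := zmod2_chi_add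
  have hSsq : S ^ 2 = ∑ u : K,
      (∑ x : K, (-1 : ℤ) ^ (Algebra.trace (ZMod 2) K (x * Mp n f a b u)).val) *
        (-1 : ℤ) ^ (Algebra.trace (ZMod 2) K (Fp f a b c u)).val := by
    rw [hS', sq, Finset.sum_mul_sum]
    have step : ∀ x : K,
        (∑ y : K, (-1 : ℤ) ^ (Algebra.trace (ZMod 2) K (Fp f a b c x)).val *
          (-1 : ℤ) ^ (Algebra.trace (ZMod 2) K (Fp f a b c y)).val) =
        ∑ u : K, (-1 : ℤ) ^ (Algebra.trace (ZMod 2) K (x * Mp n f a b u)).val *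
          (-1 : ℤ) ^ (Algebra.trace (ZMod 2) K (Fp f a b c u)).val := by
      intro x
      rw [← Fintype.sum_equiv (Equiv.addLeft x)
        (fun u => (-1 : ℤ) ^ (Algebra.trace (ZMod 2) K (Fp f a b c x)).val *
          (-1 : ℤ) ^ (Algebra.trace (ZMod 2) K (Fp f a b c (x + u))).val)
        (fun y => (-1 : ℤ) ^ (Algebra.trace (ZMod 2) K (Fp f a b c x)).val *
          (-1 : ℤ) ^ (Algebra.trace (ZMod 2) K (Fp f a b c y)).val)
        (fun u => rfl)]
      apply Finset.sum_congr rfl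
      intro u _
      rw [← hchi, ← hchi, ← map_add, hTrB x u]
    rw [Finset.sum_congr rfl (fun x _ => step x), Finset.sum_comm]
    apply Finset.sum_congr rfl
    intro u _
    rw [← Finset.sum_mul]
  have hSsq2 : S ^ 2 = 2 ^ n *
      ∑ u ∈ W', (-1 : ℤ) ^ (Algebra.trace (ZMod 2) K (Fp f a b c u)).val := by
    rw [hSsq, ← Finset.sum_filter_add_sum_filter_not Finset.univ
      (fun u => Mp n f a b u = 0)]
    have hz : (∑ u ∈ Finset.univ.filter (fun u => ¬ Mp n f a b u = 0),
        (∑ x : K, (-1 : ℤ) ^ (Algebra.trace (ZMod 2) K (x * Mp n f a b u)).val) *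
          (-1 : ℤ) ^ (Algebra.trace (ZMod 2) K (Fp f a b c u)).val) = 0 := by
      apply Finset.sum_eq_zero
      intro u hu
      rw [sum_chi_mul_eq_zero (Finset.mem_filter.mp hu).2, zero_mul]
    rw [hz, add_zero, Finset.mul_sum]
    apply Finset.sum_congr rfl
    intro u hu
    have hMu : Mp n f a b u = 0 := (Finset.mem_filter.mp hu).2
    rw [hMu]
    have : (∑ x : K, (-1 : ℤ) ^ (Algebra.trace (ZMod 2) K (x * 0)).val) = 2 ^ n := by
      simp only [mul_zero, map_zero, ZMod.val_zero, pow_zero]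
      rw [Finset.sum_const, Finset.card_univ, hcard, nsmul_eq_mul, mul_one]
      push_cast; ring
    rw [this]
  -- T = 0 or |W'|
  have hTadd : ∀ u ∈ W', ∀ v ∈ W',
      Algebra.trace (ZMod 2) K (Fp f a b c (u + v)) =
      Algebra.trace (ZMod 2) K (Fp f a b c u) +
      Algebra.trace (ZMod 2) K (Fp f a b c v) := by
    intro u _ v hv
    have hMv : Mp n f a b v = 0 := (Finset.mem_filter.mp hv).2
    have := hTrB u v
    rw [hMv, mul_zero, map_zero, zero_add, map_add] at this
    exact zmod2_solve _ _ _ this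
  have hTclosed : ∀ u ∈ W', ∀ v ∈ W', u + v ∈ W' := by
    intro u hu v hv
    rw [hW', Finset.mem_filter]
    exact ⟨Finset.mem_univ _, by
      rw [hMadd, (Finset.mem_filter.mp hu).2, (Finset.mem_filter.mp hv).2, add_zero]⟩
  obtain hT0 | hTc := sum_sign_finset W' h2K hTclosed
    (fun u => Algebra.trace (ZMod 2) K (Fp f a b c u)) hTadd
  · -- S = 0
    have : S ^ 2 = 0 := by rw [hSsq2, hT0, mul_zero]
    have hS0 : S = 0 := by
      have := pow_eq_zero_iff (n := 2) (by norm_num) |>.mp this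
      exact this
    rw [hS0]
    left; rfl
  · -- |W'| is a power of 2, at most 2^6
    have hcard_pow : ∃ w : ℕ, w ≤ 6 ∧ W'.card = 2 ^ w := by
      have hM0 : Mp n f a b 0 = 0 := by
        unfold Mp
        rw [mul_zero, mul_zero, mul_zero]
        rw [zero_pow (by norm_num), zero_pow (by norm_num), zero_pow (by norm_num),
          zero_pow (by positivity), zero_pow (by positivity), zero_pow (by positivity)]
        ring
      -- W' comes from an additive subgroup, so its cardinality divides 2^n
      set Wg : AddSubgroup K :=
        { carrier := {u | Mp n f a b u = 0}
          add_mem' := fun {u v} hu hv => by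
            show Mp n f a b (u + v) = 0
            rw [hMadd, hu, hv, add_zero]
          zero_mem' := hM0
          neg_mem' := fun {u} hu => by
            have hneg : -u = u := by
              rw [neg_eq_iff_add_eq_zero, h2K]
            show Mp n f a b (-u) = 0
            rw [hneg]; exact hu } with hWg
      have hmem : ∀ u : K, u ∈ Wg ↔ Mp n f a b u = 0 := fun u => Iff.rfl
      have hcW : Nat.card Wg = W'.card := by
        rw [Nat.card_eq_fintype_card, Fintype.card_subtype]
        congr 1
      have hdvd : W'.card ∣ 2 ^ n := by
        rw [← hcW, ← hcard, ← Nat.card_eq_fintype_card]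
        exact AddSubgroup.card_addSubgroup_dvd_card Wg
      obtain ⟨w, hwn, hww⟩ := (Nat.dvd_prime_pow Nat.prime_two).mp hdvd
      -- bound via polynomial roots
      set P : Polynomial K := Polynomial.C (f ^ 8) * Polynomial.X ^ 64 +
        Polynomial.C (a ^ 8) * Polynomial.X ^ 32 + Polynomial.C (b ^ 8) * Polynomial.X ^ 16 +
        Polynomial.C (b ^ 4) * Polynomial.X ^ 4 + Polynomial.C (a ^ 2) * Polynomial.X ^ 2 +
        Polynomial.C f * Polynomial.X with hP
      have hPne : P ≠ 0 := by
        intro h0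
        apply hfab
        have hcf : P.coeff 1 = f := by
          simp only [hP, Polynomial.coeff_add, Polynomial.coeff_C_mul, Polynomial.coeff_X_pow, Polynomial.coeff_X]; norm_num
        have hca : P.coeff 2 = a ^ 2 := by
          simp only [hP, Polynomial.coeff_add, Polynomial.coeff_C_mul, Polynomial.coeff_X_pow, Polynomial.coeff_X]; norm_num
        have hcb : P.coeff 4 = b ^ 4 := by
          simp only [hP, Polynomial.coeff_add, Polynomial.coeff_C_mul, Polynomial.coeff_X_pow, Polynomial.coeff_X]; norm_num
        rw [h0] at hcf hca hcb
        simp only [Polynomial.coeff_zero] at hcf hca hcb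
        refine ⟨hcf.symm, ?_, ?_⟩
        · have := hca.symm
          exact pow_eq_zero_iff (by norm_num) |>.mp this
        · have := hcb.symm
          exact pow_eq_zero_iff (by norm_num) |>.mp this
      have hdeg : P.natDegree ≤ 64 := by
        rw [hP]; compute_degree
      have heval : ∀ u : K, Mp n f a b u = 0 → P.eval u = 0 := by
        intro u hMu
        have t1 : ((f * u) ^ 2 ^ (n - 3)) ^ 2 ^ 3 = f * u := by
          rw [← pow_mul, ← pow_add, show n - 3 + 3 = n by omega, hq]
        have t2 : ((a * u) ^ 2 ^ (n - 2)) ^ 2 ^ 3 = (a * u) ^ 2 := by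
          rw [← pow_mul, ← pow_add, show n - 2 + 3 = n + 1 by omega, pow_succ, pow_mul, hq]
        have t3 : ((b * u) ^ 2 ^ (n - 1)) ^ 2 ^ 3 = ((b * u) ^ 2) ^ 2 := by
          rw [← pow_mul, ← pow_add, show n - 1 + 3 = n + 2 by omega,
            show n + 2 = n + 1 + 1 by omega, pow_succ, pow_succ, pow_mul, pow_mul, hq]
        have hM8 : (Mp n f a b u) ^ 2 ^ 3 =
            f ^ 8 * u ^ 64 + a ^ 8 * u ^ 32 + b ^ 8 * u ^ 16 +
            b ^ 4 * u ^ 4 + a ^ 2 * u ^ 2 + f * u := by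
          unfold Mp
          rw [hp 3, hp 3, hp 3, hp 3, hp 3, t1, t2, t3]
          norm_num
          ring
        have : P.eval u = (Mp n f a b u) ^ 2 ^ 3 := by
          rw [hM8, hP]
          simp [Polynomial.eval_add, Polynomial.eval_mul, Polynomial.eval_pow]
        rw [this, hMu]
        exact zero_pow (by norm_num)
      have hsub : W' ⊆ P.roots.toFinset := by
        intro u hu
        rw [Multiset.mem_toFinset, Polynomial.mem_roots hPne]
        exact heval u (Finset.mem_filter.mp hu).2
      have hle : W'.card ≤ 64 :=
        le_trans (Finset.card_le_card hsub)
          (le_trans (Multiset.toFinset_card_le _) (le_trans (Polynomial.card_roots' P) hdeg))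
      refine ⟨w, ?_, hww⟩
      rw [hww] at hle
      have : (2 : ℕ) ^ w ≤ 2 ^ 6 := by norm_num at hle ⊢; omega
      exact (Nat.pow_le_pow_iff_right (by norm_num)).mp this
    obtain ⟨w, hw6, hww⟩ := hcard_pow
    have hSsq3 : S ^ 2 = 2 ^ (n + w) := by
      rw [hSsq2, hTc, hww, pow_add]
      push_cast; ring
    obtain ⟨k, hk, hSk⟩ := int_sqrt_pow_two hSsq3
    have hw135 : w = 1 ∨ w = 3 ∨ w = 5 := by omega
    simp only [Set.mem_insert_iff, Set.mem_singleton_iff]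
    rcases hw135 with hw1 | hw3 | hw5
    · have : (n + 1) / 2 = k := by omega
      rw [this]
      rcases hSk with h | h
      · right; left; exact h
      · right; right; left; exact h
    · have : (n + 3) / 2 = k := by omega
      rw [this]
      rcases hSk with h | h
      · right; right; right; left; exact h
      · right; right; right; right; left; exact h
    · have : (n + 5) / 2 = k := by omega
      rw [this]
      rcases hSk with h | h
      · right; right; right; right; right; left; exact h
      · right; right; right; right; right; right; exact h
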